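/- Let G and H be connected non-trivial graphs with H not complete. If tn(G ∘ H) = 3 · tn(G), then tn(G) = 2. -/

import Mathlib

open SimpleGraph

/-- A walk `W` between `u` and `v` is a *tolled walk* if either `u = v` and `W` is trivial,
or `u` and `v` are adjacent and `W` is the single-edge walk, or `u ≠ v` are non-adjacent,
`W` has at least one interior vertex, `u` is adjacent exactly to the interior vertex
at position 1 and `v` exactly to the interior vertex at position `W.length - 1`. -/
def IsTolledWalk {V : Type*} (G : SimpleGraph V) {u v : V} (W : G.Walk u v) : Prop :=
  (u = v ∧ W.length = 0) ∨
  (G.Adj u v ∧ W.support = [u, v]) ∨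
  (¬ G.Adj u v ∧ u ≠ v ∧ 2 ≤ W.length ∧
    (∀ i, 0 < i → i < W.length → (G.Adj u (W.support.getD i u) ↔ i = 1)) ∧
    (∀ i, 0 < i → i < W.length → (G.Adj v (W.support.getD i u) ↔ i = W.length - 1)))

/-- The toll interval between `u` and `v`: vertices lying on some tolled walk. -/
def tollInterval {V : Type*} (G : SimpleGraph V) (u v : V) : Set V :=
  {x | ∃ W : G.Walk u v, IsTolledWalk G W ∧ x ∈ W.support}

/-- A toll set: the toll intervals between its pairs cover the vertex set. -/
def IsTollSet {V : Type*} (G : SimpleGraph V) (S : Set V) : Prop :=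
  ∀ x : V, ∃ u ∈ S, ∃ v ∈ S, x ∈ tollInterval G u v

/-- The toll number: minimum size of a toll set. -/
noncomputable def tollNumber {V : Type*} (G : SimpleGraph V) : ℕ :=
  sInf {n | ∃ S : Set V, S.Finite ∧ S.ncard = n ∧ IsTollSet G S}

/-- `v` is a cut vertex if deleting it disconnects the graph. -/
def IsCutVertex {V : Type*} (G : SimpleGraph V) (v : V) : Prop :=
  ¬ (G.induce {w | w ≠ v}).Preconnected

/-- The extreme vertices of `G` with respect to toll convexity. -/
def extremeVertices {V : Type*} (G : SimpleGraph V) : Set V :=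
  {s | ∀ x y : V, x ≠ s → y ≠ s → s ∉ tollInterval G x y}

/-- The lexicographic product of simple graphs. -/
def lexProd {V W : Type*} (G : SimpleGraph V) (H : SimpleGraph W) : SimpleGraph (V × W) where
  Adj a b := G.Adj a.1 b.1 ∨ (a.1 = b.1 ∧ H.Adj a.2 b.2)
  symm := ⟨by
    rintro a b (h | ⟨h1, h2⟩)
    · exact Or.inl h.symm
    · exact Or.inr ⟨h1.symm, h2.symm⟩⟩
  loopless := ⟨by
    rintro a (h | ⟨_, h⟩)
    · exact G.irrefl h
    · exact H.irrefl h⟩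


/-!
Take a minimum toll set `S` of `G` and non-adjacent `a ≠ b` in `H`. A vertex lying strictly
inside a tolled walk between two vertices of `S` lies, in every fibre, inside the lifted walk
between the corresponding vertices of `S × {a}`. Any other vertex `s ∈ S` lies, in every fibre,
on the tolled walk `(d, a) (s, c) (d, b)` for a neighbour `d` of `s`. So if `D` dominates these
vertices, `(S ∪ D) × {a} ∪ D × {b}` is a toll set of `G ∘ H` and
`tn (G ∘ H) ≤ |S| + |D| + |D \ S|`.

Unless `S` is scattered (no vertex of `S` is interior and its vertices are pairwise at distance
at least three), some vertex of `S` needs no neighbour in `D` or two vertices of `S` can share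
one, and `|D| + |D \ S| ≤ 2 |S| - 2` gives `tn (G ∘ H) < 3 tn G`. In a scattered toll set of a
connected graph every vertex has exactly one partner joined to it by a tolled walk, and the toll
interval of a pair of partners is closed under adjacency, hence is everything; so `|S| ≤ 2`.
-/

namespace SimpleGraph.Walk

variable {V : Type*} {G : SimpleGraph V} {u v w x : V}

def IsTolledAtStart (W : G.Walk u v) : Prop :=
  ∀ y ∈ W.support.drop 2, ¬ G.Adj u y

/-- The third clause of `IsTolledWalk`, phrased through the vertices that the two endpoints
must not see. -/
structure IsLongTolled (W : G.Walk u v) : Prop where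
  ne : u ≠ v
  two_le_length : 2 ≤ W.length
  isTolledAtStart : W.IsTolledAtStart
  isTolledAtStart_reverse : W.reverse.IsTolledAtStart

lemma isTolledAtStart_iff_getVert (W : G.Walk u v) :
    W.IsTolledAtStart ↔ ∀ i, 2 ≤ i → i ≤ W.length → ¬ G.Adj u (W.getVert i) := by
  have hlen := W.length_support
  simp only [IsTolledAtStart, List.mem_iff_getElem, List.length_drop, List.getElem_drop]
  constructor
  · intro h i h2 hi
    exact h _ ⟨i - 2, by omega, by rw [support_getElem_eq_getVert]; congr 1; omega⟩
  · rintro h _ ⟨j, hj, rfl⟩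
    rw [support_getElem_eq_getVert]
    exact h _ (by omega) (by omega)

lemma isTolledAtStart_reverse_iff_getVert (W : G.Walk u v) :
    W.reverse.IsTolledAtStart ↔ ∀ i, i + 2 ≤ W.length → ¬ G.Adj v (W.getVert i) := by
  rw [isTolledAtStart_iff_getVert, length_reverse]
  simp only [getVert_reverse]
  constructor
  · intro h i hi
    simpa [show W.length - (W.length - i) = i by omega] using h (W.length - i) (by omega) (by omega)
  · intro h i h2 hi
    exact h _ (by omega)

lemma IsLongTolled.reverse {W : G.Walk u v} (h : W.IsLongTolled) : W.reverse.IsLongTolled :=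
  ⟨h.ne.symm, by simpa using h.two_le_length, h.isTolledAtStart_reverse,
    by simpa using h.isTolledAtStart⟩

lemma IsLongTolled.not_adj {W : G.Walk u v} (h : W.IsLongTolled) : ¬ G.Adj u v := by
  simpa using (W.isTolledAtStart_iff_getVert.1 h.isTolledAtStart) _ h.two_le_length le_rfl

lemma isLongTolled_iff (W : G.Walk u v) :
    W.IsLongTolled ↔ ¬ G.Adj u v ∧ u ≠ v ∧ 2 ≤ W.length ∧
      (∀ i, 0 < i → i < W.length → (G.Adj u (W.support.getD i u) ↔ i = 1)) ∧
      (∀ i, 0 < i → i < W.length → (G.Adj v (W.support.getD i u) ↔ i = W.length - 1)) := by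
  have hgetD : ∀ i, i < W.length → W.support.getD i u = W.getVert i := fun i hi => by
    rw [List.getD_eq_getElem _ _ (by rw [length_support]; omega), support_getElem_eq_getVert]
  constructor
  · intro hW
    have hnadj := hW.not_adj
    obtain ⟨hne, h2, hstart, hend⟩ := hW
    rw [isTolledAtStart_iff_getVert] at hstart
    rw [isTolledAtStart_reverse_iff_getVert] at hend
    refine ⟨hnadj, hne, h2, fun i h0 hi => ?_, fun i h0 hi => ?_⟩ <;> rw [hgetD i hi]
    · refine ⟨fun hadj => by_contra fun h1 => hstart i (by omega) hi.le hadj, ?_⟩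
      rintro rfl
      simpa using W.adj_getVert_succ (i := 0) (by omega)
    · refine ⟨fun hadj => by_contra fun h1 => hend i (by omega) hadj, ?_⟩
      rintro rfl
      simpa [Nat.sub_add_cancel (by omega : 1 ≤ W.length)] using
        (W.adj_getVert_succ (i := W.length - 1) (by omega)).symm
  · rintro ⟨hnadj, hne, h2, hstart, hend⟩
    refine ⟨hne, h2, W.isTolledAtStart_iff_getVert.2 fun i hi2 hi hadj => ?_,
      W.isTolledAtStart_reverse_iff_getVert.2 fun i hi hadj => ?_⟩
    · rcases hi.eq_or_lt with rfl | hlt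
      · exact hnadj (by simpa using hadj)
      · have := (hstart i (by omega) hlt).1 (by rwa [hgetD i hlt])
        omega
    · rcases Nat.eq_zero_or_pos i with rfl | hpos
      · exact hnadj (by simpa using hadj.symm)
      · have := (hend i hpos (by omega)).1 (by rwa [hgetD i (by omega)])
        omega

lemma isTolledAtStart_append_iff (p : G.Walk u v) (q : G.Walk v w) (hp : 0 < p.length) :
    (p.append q).IsTolledAtStart ↔
      p.IsTolledAtStart ∧ ∀ y ∈ q.support.tail, ¬ G.Adj u y := by
  have hlen : 2 - p.support.length = 0 := by rw [length_support]; omega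
  simp only [IsTolledAtStart, support_append, List.drop_append, hlen, List.drop_zero,
    List.mem_append, or_imp, forall_and]

lemma IsTolledAtStart.of_append {p : G.Walk u v} {q : G.Walk v w}
    (h : (p.append q).IsTolledAtStart) : p.IsTolledAtStart := fun y hy =>
  h y (by rw [support_append, List.drop_append]; exact List.mem_append_left _ hy)

lemma IsLongTolled.append {p : G.Walk u v} {q : G.Walk v w} (hp : p.IsLongTolled)
    (hq : q.IsLongTolled) (hne : u ≠ w) (hu : ∀ y ∈ q.support, ¬ G.Adj u y)
    (hw : ∀ y ∈ p.support, ¬ G.Adj w y) : (p.append q).IsLongTolled := by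
  have hp2 := hp.two_le_length
  have hq2 := hq.two_le_length
  refine ⟨hne, by rw [length_append]; omega, ?_, ?_⟩
  · exact (isTolledAtStart_append_iff _ _ (by omega)).2
      ⟨hp.isTolledAtStart, fun y hy => hu y (List.mem_of_mem_tail hy)⟩
  · rw [reverse_append, isTolledAtStart_append_iff _ _ (by rw [length_reverse]; omega)]
    refine ⟨hq.isTolledAtStart_reverse, fun y hy => hw y ?_⟩
    simpa using List.mem_of_mem_tail hy

/-- Splicing the excursion `w → s → w` into `W` keeps it tolled. -/
lemma IsLongTolled.exists_detour {W : G.Walk u v} {s : V} (hW : W.IsLongTolled)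
    (hw : w ∈ W.support) (hwu : w ≠ u) (hwv : w ≠ v) (hws : G.Adj w s)
    (huw : ¬ G.Adj u w) (hvw : ¬ G.Adj v w) (hus : ¬ G.Adj u s) (hvs : ¬ G.Adj v s) :
    ∃ Z : G.Walk u v, Z.IsLongTolled ∧ s ∈ Z.support := by
  classical
  set p := W.takeUntil w hw
  set q := W.dropUntil w hw
  have hpq : p.append q = W := W.take_spec hw
  have hp : 0 < p.length := Nat.pos_of_ne_zero fun h => hwu (eq_of_length_eq_zero h).symm
  have hq : 0 < q.length := Nat.pos_of_ne_zero fun h => hwv (eq_of_length_eq_zero h)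
  have hstart := hW.isTolledAtStart
  rw [← hpq, isTolledAtStart_append_iff _ _ hp] at hstart
  have hend := hW.isTolledAtStart_reverse
  rw [← hpq, reverse_append, isTolledAtStart_append_iff _ _ (by rw [length_reverse]; exact hq)]
    at hend
  refine ⟨p.append (cons hws (cons hws.symm q)), ⟨hW.ne, ?_, ?_, ?_⟩, by simp⟩
  · simp only [length_append, length_cons]
    omega
  · refine (isTolledAtStart_append_iff _ _ hp).2 ⟨hstart.1, ?_⟩
    simp only [support_cons, List.tail_cons]
    rw [← q.cons_tail_support]
    simp only [List.mem_cons]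
    rintro y (rfl | rfl | hy)
    exacts [hus, huw, hstart.2 y hy]
  · have : (p.append (cons hws (cons hws.symm q))).reverse =
        q.reverse.append (cons hws (cons hws.symm p.reverse)) := by
      simp [reverse_append, reverse_cons, ← append_assoc]
    rw [this, isTolledAtStart_append_iff _ _ (by rw [length_reverse]; exact hq)]
    refine ⟨hend.1, ?_⟩
    simp only [support_cons, List.tail_cons]
    rw [← p.reverse.cons_tail_support]
    simp only [List.mem_cons]
    rintro y (rfl | rfl | hy)
    exacts [hvs, hvw, hend.2 y hy]

/-- The walk runs along `W₁` to `x`, crosses to `y` and returns along `W₂` to its start. -/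
lemma IsTolledAtStart.exists_isLongTolled_of_adj {a b c d y : V} {W₁ : G.Walk a b}
    {W₂ : G.Walk c d} (h₁ : W₁.IsTolledAtStart) (h₂ : W₂.IsTolledAtStart)
    (hx : x ∈ W₁.support) (hxa : x ≠ a) (hy : y ∈ W₂.support) (hyc : y ≠ c) (hxy : G.Adj x y)
    (ha : ∀ z ∈ W₂.support, ¬ G.Adj a z) (hc : ∀ z ∈ W₁.support, ¬ G.Adj c z) :
    ∃ Z : G.Walk a c, Z.IsLongTolled := by
  classical
  set P := W₁.takeUntil x hx
  set T := W₂.takeUntil y hy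
  have hP : 0 < P.length := Nat.pos_of_ne_zero fun h => hxa (eq_of_length_eq_zero h).symm
  have hT : 0 < T.length := Nat.pos_of_ne_zero fun h => hyc (eq_of_length_eq_zero h).symm
  have hPW := W₁.support_takeUntil_subset_support hx
  have hTW := W₂.support_takeUntil_subset_support hy
  rw [← W₁.take_spec hx] at h₁
  rw [← W₂.take_spec hy] at h₂
  have hac : a ≠ c := by
    rintro rfl
    have hnil := P.not_nil_of_ne hxa.symm
    exact hc _ (hPW (P.getVert_mem_support 1)) (P.adj_snd hnil)
  refine ⟨P.append (cons hxy T.reverse), ⟨hac, ?_, ?_, ?_⟩⟩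
  · simp only [length_append, length_cons, length_reverse]
    omega
  · refine (isTolledAtStart_append_iff _ _ hP).2 ⟨h₁.of_append, fun z hz => ha z (hTW ?_)⟩
    simpa using hz
  · have : (P.append (cons hxy T.reverse)).reverse = T.append (cons hxy.symm P.reverse) := by
      simp [reverse_append, reverse_cons, ← append_assoc]
    rw [this, isTolledAtStart_append_iff _ _ hT]
    refine ⟨h₂.of_append, fun z hz => hc z (hPW ?_)⟩
    simpa using hz

lemma IsTolledAtStart.map {V' : Type*} {G' : SimpleGraph V'} (f : G →g G') {W : G.Walk u v}
    (h : W.IsTolledAtStart) (hu : ∀ y ∈ W.support, G'.Adj (f u) (f y) → G.Adj u y) :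
    (W.map f).IsTolledAtStart := by
  intro y' hy'
  rw [support_map, ← List.map_drop, List.mem_map] at hy'
  obtain ⟨y, hy, rfl⟩ := hy'
  exact fun hadj => h y hy (hu y (List.mem_of_mem_drop hy) hadj)

lemma IsLongTolled.map {V' : Type*} {G' : SimpleGraph V'} (f : G →g G') {W : G.Walk u v}
    (h : W.IsLongTolled) (hne : f u ≠ f v)
    (hu : ∀ y ∈ W.support, G'.Adj (f u) (f y) → G.Adj u y)
    (hv : ∀ y ∈ W.support, G'.Adj (f v) (f y) → G.Adj v y) : (W.map f).IsLongTolled := by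
  refine ⟨hne, by simpa using h.two_le_length, h.isTolledAtStart.map f hu, ?_⟩
  rw [reverse_map]
  exact h.isTolledAtStart_reverse.map f fun y hy => hv y (by simpa using hy)

lemma IsLongTolled.isTolledWalk {W : G.Walk u v} (h : W.IsLongTolled) : IsTolledWalk G W :=
  Or.inr (Or.inr (W.isLongTolled_iff.1 h))

lemma IsLongTolled.mem_tollInterval {W : G.Walk u v} (h : W.IsLongTolled) (hx : x ∈ W.support) :
    x ∈ tollInterval G u v :=
  ⟨W, h.isTolledWalk, hx⟩

end SimpleGraph.Walk

open SimpleGraph.Walk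

section TollConvexity

variable {V : Type*} {G : SimpleGraph V} {u v x : V}

lemma IsTolledWalk.isLongTolled {W : G.Walk u v} (h : IsTolledWalk G W) (hne : u ≠ v)
    (hadj : ¬ G.Adj u v) : W.IsLongTolled := by
  rcases h with ⟨h, -⟩ | ⟨h, -⟩ | h
  exacts [absurd h hne, absurd h hadj, W.isLongTolled_iff.2 h]

lemma IsTolledWalk.reverse {W : G.Walk u v} (h : IsTolledWalk G W) :
    IsTolledWalk G W.reverse := by
  rcases h with ⟨rfl, hlen⟩ | ⟨hadj, hsupp⟩ | h
  · exact Or.inl ⟨rfl, by simpa using hlen⟩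
  · exact Or.inr (Or.inl ⟨hadj.symm, by simp [hsupp]⟩)
  · exact (W.isLongTolled_iff.2 h).reverse.isTolledWalk

lemma tollInterval_comm (G : SimpleGraph V) (u v : V) :
    tollInterval G u v = tollInterval G v u := by
  have key : ∀ u v, tollInterval G u v ⊆ tollInterval G v u := fun _ _ _ ⟨W, hW, hx⟩ =>
    ⟨W.reverse, hW.reverse, by simpa using hx⟩
  exact (key u v).antisymm (key v u)

lemma mem_tollInterval_iff_of_not_adj (hne : u ≠ v) (hadj : ¬ G.Adj u v) :
    x ∈ tollInterval G u v ↔ ∃ W : G.Walk u v, W.IsLongTolled ∧ x ∈ W.support :=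
  ⟨fun ⟨W, hW, hx⟩ => ⟨W, hW.isLongTolled hne hadj, hx⟩,
    fun ⟨_, hW, hx⟩ => hW.mem_tollInterval hx⟩

lemma exists_isLongTolled_of_mem_tollInterval (h : x ∈ tollInterval G u v) (hxu : x ≠ u)
    (hxv : x ≠ v) : ∃ W : G.Walk u v, W.IsLongTolled ∧ x ∈ W.support := by
  obtain ⟨W, hW, hx⟩ := h
  rcases hW with ⟨rfl, hlen⟩ | ⟨-, hsupp⟩ | hW
  · obtain ⟨n, rfl, hn⟩ := mem_support_iff_exists_getVert.1 hx
    exact absurd (by rw [show n = 0 by omega, getVert_zero]) hxu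
  · rw [hsupp, List.mem_pair] at hx
    exact hx.elim (absurd · hxu) (absurd · hxv)
  · exact ⟨W, W.isLongTolled_iff.2 hW, hx⟩

lemma eq_of_mem_tollInterval_self (h : x ∈ tollInterval G u u) : x = u := by
  by_contra hxu
  obtain ⟨W, hW, -⟩ := exists_isLongTolled_of_mem_tollInterval h hxu hxu
  exact hW.ne rfl

lemma isTollSet_univ (G : SimpleGraph V) : IsTollSet G Set.univ := fun x =>
  ⟨x, trivial, x, trivial, Walk.nil, Or.inl ⟨rfl, rfl⟩, List.mem_singleton_self x⟩

lemma tollNumber_le {T : Set V} (hT : T.Finite) (h : IsTollSet G T) : tollNumber G ≤ T.ncard :=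
  Nat.sInf_le ⟨T, hT, rfl, h⟩

lemma exists_isTollSet_ncard_eq_tollNumber [Finite V] (G : SimpleGraph V) :
    ∃ S : Set V, S.Finite ∧ S.ncard = tollNumber G ∧ IsTollSet G S :=
  Nat.sInf_mem (s := {n | ∃ S : Set V, S.Finite ∧ S.ncard = n ∧ IsTollSet G S})
    ⟨_, Set.univ, Set.finite_univ, rfl, isTollSet_univ G⟩

lemma two_le_tollNumber [Finite V] [Nontrivial V] (G : SimpleGraph V) : 2 ≤ tollNumber G := by
  obtain ⟨S, hSfin, hcard, hS⟩ := exists_isTollSet_ncard_eq_tollNumber G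
  rw [← hcard]
  by_contra! h
  have hS1 := (Set.ncard_le_one hSfin).1 (by omega)
  have hcover : ∀ x, ∃ s ∈ S, x = s := fun x => by
    obtain ⟨u, hu, v, hv, hx⟩ := hS x
    rw [hS1 v hv u hu] at hx
    exact ⟨u, hu, eq_of_mem_tollInterval_self hx⟩
  obtain ⟨x, y, hxy⟩ := exists_pair_ne V
  obtain ⟨s, hs, rfl⟩ := hcover x
  obtain ⟨t, ht, rfl⟩ := hcover y
  exact hxy (hS1 _ hs _ ht)

def IsTollInterior (G : SimpleGraph V) (S : Set V) (x : V) : Prop :=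
  ∃ u ∈ S, ∃ v ∈ S, x ≠ u ∧ x ≠ v ∧ x ∈ tollInterval G u v

end TollConvexity

section LexProd

variable {α β : Type*} {G : SimpleGraph α} (H : SimpleGraph β) {u v x : α} {S D : Set α} {a b : β}

lemma mem_tollInterval_lexProd_of_mem_support {W : G.Walk u v} (hW : W.IsLongTolled)
    (hx : x ∈ W.support) (hxu : x ≠ u) (hxv : x ≠ v) (b c : β) :
    (x, c) ∈ tollInterval (lexProd G H) (u, b) (v, b) := by
  classical
  let f : G →g lexProd G H := ⟨fun y => (y, if y = x then c else b), Or.inl⟩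
  have hf : ∀ y, y ≠ x → f y = (y, b) := fun y hy => Prod.ext rfl (if_neg hy)
  have hside : ∀ z, z ≠ x → ∀ y, (lexProd G H).Adj (f z) (f y) → G.Adj z y := by
    rintro z hz y (h | ⟨h, h'⟩)
    · exact h
    · rw [hf z hz] at h h'
      obtain rfl : z = y := h
      rw [hf z hz] at h'
      exact (H.irrefl h').elim
  have hfW := hW.map f (by simp [hf u hxu.symm, hf v hxv.symm, hW.ne])
    (fun y _ => hside u hxu.symm y) (fun y _ => hside v hxv.symm y)
  have := hfW.mem_tollInterval (x := f x) (by simpa [Walk.support_map] using ⟨x, hx, rfl⟩)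
  rwa [hf u hxu.symm, hf v hxv.symm, show f x = (x, c) from Prod.ext rfl (if_pos rfl)] at this

lemma mem_tollInterval_lexProd_of_adj {d s : α} (hds : G.Adj d s) (hab : a ≠ b)
    (hnab : ¬ H.Adj a b) (c : β) : (s, c) ∈ tollInterval (lexProd G H) (d, a) (d, b) := by
  have h₁ : (lexProd G H).Adj (d, a) (s, c) := Or.inl hds
  have h₂ : (lexProd G H).Adj (s, c) (d, b) := Or.inl hds.symm
  refine IsLongTolled.mem_tollInterval (W := .cons h₁ (.cons h₂ .nil))
    ⟨by simp [hab], by simp, ?_, ?_⟩ (by simp)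
  · simp only [IsTolledAtStart, Walk.support_cons, Walk.support_nil]
    simp [lexProd, hnab]
  · simp only [IsTolledAtStart, Walk.support_reverse, Walk.support_cons, Walk.support_nil]
    simp [lexProd, hnab, H.adj_comm]


lemma isTollSet_lexProd (hS : IsTollSet G S)
    (hD : ∀ s ∈ S, ¬ IsTollInterior G S s → ∃ d ∈ D, G.Adj s d) (hab : a ≠ b)
    (hnab : ¬ H.Adj a b) : IsTollSet (lexProd G H) ((S ∪ D) ×ˢ {a} ∪ D ×ˢ {b}) := by
  rintro ⟨x, c⟩
  by_cases hx : IsTollInterior G S x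
  · obtain ⟨u, hu, v, hv, hxu, hxv, hx⟩ := hx
    obtain ⟨W, hW, hxW⟩ := exists_isLongTolled_of_mem_tollInterval hx hxu hxv
    exact ⟨(u, a), Or.inl ⟨Or.inl hu, rfl⟩, (v, a), Or.inl ⟨Or.inl hv, rfl⟩,
      mem_tollInterval_lexProd_of_mem_support H hW hxW hxu hxv a c⟩
  · have hxS : x ∈ S := by
      by_contra hxS
      obtain ⟨u, hu, v, hv, hxI⟩ := hS x
      exact hx ⟨u, hu, v, hv, fun h => hxS (h ▸ hu), fun h => hxS (h ▸ hv), hxI⟩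
    obtain ⟨d, hd, hxd⟩ := hD x hxS hx
    exact ⟨(d, a), Or.inl ⟨Or.inr hd, rfl⟩, (d, b), Or.inr ⟨hd, rfl⟩,
      mem_tollInterval_lexProd_of_adj H hxd.symm hab hnab c⟩

lemma tollNumber_lexProd_le (hSfin : S.Finite) (hDfin : D.Finite) (hS : IsTollSet G S)
    (hD : ∀ s ∈ S, ¬ IsTollInterior G S s → ∃ d ∈ D, G.Adj s d) (hab : a ≠ b)
    (hnab : ¬ H.Adj a b) : tollNumber (lexProd G H) ≤ S.ncard + D.ncard + (D \ S).ncard := by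
  have hfin : ((S ∪ D) ×ˢ {a} ∪ D ×ˢ {b}).Finite :=
    ((hSfin.union hDfin).prod (Set.finite_singleton a)).union
      (hDfin.prod (Set.finite_singleton b))
  calc tollNumber (lexProd G H)
      ≤ ((S ∪ D) ×ˢ {a} ∪ D ×ˢ {b}).ncard :=
        tollNumber_le hfin (isTollSet_lexProd H hS hD hab hnab)
    _ ≤ (S ∪ D).ncard + D.ncard := by
      have := Set.ncard_union_le ((S ∪ D) ×ˢ {a}) (D ×ˢ {b})
      rwa [Set.ncard_prod, Set.ncard_prod, Set.ncard_singleton, Set.ncard_singleton, mul_one,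
        mul_one] at this
    _ ≤ S.ncard + D.ncard + (D \ S).ncard := by
      have := Set.ncard_union_le S (D \ S)
      rw [Set.union_sdiff_self] at this
      omega

end LexProd

section Scattered

variable {V : Type*} {G : SimpleGraph V} {S : Set V}

structure IsTollScattered (G : SimpleGraph V) (S : Set V) : Prop where
  not_isTollInterior : ∀ s ∈ S, ¬ IsTollInterior G S s
  not_adj : ∀ s ∈ S, ∀ t ∈ S, s ≠ t → ¬ G.Adj s t
  not_adj_of_adj : ∀ s ∈ S, ∀ t ∈ S, s ≠ t → ∀ w, G.Adj s w → ¬ G.Adj t w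

lemma exists_dominating_of_subset {R E : Set V} (hS : S.Finite)
    (hnbr : ∀ z, ∃ w, G.Adj z w) (hRS : R ⊆ S) (hE : E.Finite)
    (hRE : ∀ s ∈ R, ¬ IsTollInterior G S s → ∃ e ∈ E, G.Adj s e) :
    ∃ D : Set V, D.Finite ∧ (∀ s ∈ S, ¬ IsTollInterior G S s → ∃ d ∈ D, G.Adj s d) ∧
      D.ncard + (D \ S).ncard + 2 * R.ncard ≤ 2 * S.ncard + E.ncard + (E \ S).ncard := by
  choose nb hnb using hnbr
  refine ⟨nb '' (S \ R) ∪ E, (hS.sdiff.image nb).union hE, fun s hs hext => ?_, ?_⟩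
  · by_cases hsR : s ∈ R
    · obtain ⟨e, he, hse⟩ := hRE s hsR hext
      exact ⟨e, Or.inr he, hse⟩
    · exact ⟨nb s, Or.inl ⟨s, ⟨hs, hsR⟩, rfl⟩, hnb s⟩
  · have hSR : (S \ R).ncard + R.ncard = S.ncard := Set.ncard_sdiff_add_ncard_of_subset hRS hS
    have himg : (nb '' (S \ R)).ncard ≤ (S \ R).ncard := Set.ncard_image_le hS.sdiff
    have h₁ := Set.ncard_union_le (nb '' (S \ R)) E
    have h₂ : ((nb '' (S \ R) ∪ E) \ S).ncard ≤ (nb '' (S \ R)).ncard + (E \ S).ncard := by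
      rw [Set.union_sdiff_distrib]
      exact (Set.ncard_union_le _ _).trans
        (Nat.add_le_add_right (Set.ncard_le_ncard Set.sdiff_subset (hS.sdiff.image nb)) _)
    omega

lemma exists_dominating_of_not_isTollScattered (hS : S.Finite) (hnbr : ∀ z, ∃ w, G.Adj z w)
    (h : ¬ IsTollScattered G S) :
    ∃ D : Set V, D.Finite ∧ (∀ s ∈ S, ¬ IsTollInterior G S s → ∃ d ∈ D, G.Adj s d) ∧
      D.ncard + (D \ S).ncard + 2 ≤ 2 * S.ncard := by
  suffices ∃ R ⊆ S, ∃ E : Set V, E.Finite ∧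
      (∀ s ∈ R, ¬ IsTollInterior G S s → ∃ e ∈ E, G.Adj s e) ∧
      E.ncard + (E \ S).ncard + 2 ≤ 2 * R.ncard by
    obtain ⟨R, hRS, E, hE, hRE, hcard⟩ := this
    obtain ⟨D, hD, hdom, hDcard⟩ := exists_dominating_of_subset hS hnbr hRS hE hRE
    exact ⟨D, hD, hdom, by omega⟩
  by_contra hno
  refine h ⟨fun s hs hint => hno ⟨{s}, by simpa, ∅, Set.finite_empty, by simp [hint], by simp⟩,
    fun s hs t ht hst hadj =>
      hno ⟨{s, t}, Set.pair_subset hs ht, {s, t}, Set.toFinite _, ?_, ?_⟩,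
    fun s hs t ht hst w hsw htw =>
      hno ⟨{s, t}, Set.pair_subset hs ht, {w}, Set.toFinite _, ?_, ?_⟩⟩
  · rintro r (rfl | rfl) -
    exacts [⟨t, by simp, hadj⟩, ⟨s, by simp, hadj.symm⟩]
  · rw [Set.ncard_pair hst, Set.sdiff_eq_empty.2 (Set.pair_subset hs ht)]
    simp
  · rintro r (rfl | rfl) -
    exacts [⟨w, rfl, hsw⟩, ⟨w, rfl, htw⟩]
  · have := Set.ncard_le_ncard (Set.sdiff_subset : {w} \ S ⊆ {w})
    simp only [Set.ncard_singleton, Set.ncard_pair hst] at this ⊢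
    omega

namespace IsTollScattered

lemma not_adj_of_mem_support (hsc : IsTollScattered G S) {a b s w : V} {W : G.Walk a b}
    (hW : W.IsLongTolled) (ha : a ∈ S) (hb : b ∈ S) (hs : s ∈ S) (hsa : s ≠ a) (hsb : s ≠ b)
    (hw : w ∈ W.support) : ¬ G.Adj s w := by
  intro hsw
  by_cases hwa : w = a
  · exact hsc.not_adj s hs w (hwa ▸ ha) (hwa ▸ hsa) hsw
  by_cases hwb : w = b
  · exact hsc.not_adj s hs w (hwb ▸ hb) (hwb ▸ hsb) hsw
  have haw : ¬ G.Adj a w := fun haw => hsc.not_adj_of_adj a ha s hs hsa.symm w haw hsw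
  have hbw : ¬ G.Adj b w := fun hbw => hsc.not_adj_of_adj b hb s hs hsb.symm w hbw hsw
  obtain ⟨Z, hZ, hsZ⟩ := hW.exists_detour hw hwa hwb hsw.symm haw hbw
    (hsc.not_adj a ha s hs hsa.symm) (hsc.not_adj b hb s hs hsb.symm)
  exact hsc.not_isTollInterior s hs ⟨a, ha, b, hb, hsa, hsb, hZ.mem_tollInterval hsZ⟩

lemma eq_of_isLongTolled (hsc : IsTollScattered G S) {s a c : V} (hs : s ∈ S) (ha : a ∈ S)
    (hc : c ∈ S) {W₁ : G.Walk s a} {W₂ : G.Walk s c} (h₁ : W₁.IsLongTolled) (h₂ : W₂.IsLongTolled) :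
    a = c := by
  by_contra hac
  have hZ := h₁.reverse.append h₂ hac
    (fun y hy => hsc.not_adj_of_mem_support h₂ hs hc ha h₁.ne.symm hac hy)
    (fun y hy => hsc.not_adj_of_mem_support h₁.reverse ha hs hc (Ne.symm hac) h₂.ne.symm hy)
  exact hsc.not_isTollInterior s hs
    ⟨a, ha, c, hc, h₁.ne, h₂.ne, hZ.mem_tollInterval (by simp)⟩

lemma exists_isLongTolled (hsc : IsTollScattered G S) (hS : IsTollSet G S) {s n : V}
    (hs : s ∈ S) (hsn : G.Adj s n) :
    ∃ t ∈ S, ∃ W : G.Walk s t, W.IsLongTolled := by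
  have hnS : n ∉ S := fun hn => hsc.not_adj s hs n hn hsn.ne hsn
  obtain ⟨u, hu, v, hv, hn⟩ := hS n
  obtain ⟨W, hW, hnW⟩ :=
    exists_isLongTolled_of_mem_tollInterval hn (fun h => hnS (h ▸ hu)) (fun h => hnS (h ▸ hv))
  by_cases hsu : s = u
  · subst hsu
    exact ⟨v, hv, W, hW⟩
  by_cases hsv : s = v
  · subst hsv
    exact ⟨u, hu, W.reverse, hW.reverse⟩
  exact absurd hsn (hsc.not_adj_of_mem_support hW hu hv hs hsu hsv hnW)

lemma mem_tollInterval_of_adj (hsc : IsTollScattered G S) (hS : IsTollSet G S)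
    {s₁ s₂ p q : V} (hs₁ : s₁ ∈ S) (hs₂ : s₂ ∈ S) {W₁₂ : G.Walk s₁ s₂} (h₁₂ : W₁₂.IsLongTolled)
    (hp : p ∈ tollInterval G s₁ s₂) (hpq : G.Adj p q) : q ∈ tollInterval G s₁ s₂ := by
  obtain ⟨Wp, hWp, hpWp⟩ := (mem_tollInterval_iff_of_not_adj h₁₂.ne h₁₂.not_adj).1 hp
  have hshare : ∀ {a b : V} {W : G.Walk a b}, W.IsLongTolled → b ∈ S → (a = s₁ ∨ a = s₂) →
      ∀ x ∈ W.support, x ∈ tollInterval G s₁ s₂ := by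
    rintro a b W hW hb (rfl | rfl) x hx
    · obtain rfl := hsc.eq_of_isLongTolled hs₁ hs₂ hb h₁₂ hW
      exact hW.mem_tollInterval hx
    · obtain rfl := hsc.eq_of_isLongTolled hs₂ hs₁ hb h₁₂.reverse hW
      rw [tollInterval_comm]
      exact hW.mem_tollInterval hx
  by_cases hqS : q ∈ S
  · by_cases hq : q = s₁ ∨ q = s₂
    · exact hshare h₁₂ hs₂ (Or.inl rfl) q (by rcases hq with rfl | rfl <;> simp)
    push Not at hq
    exact absurd hpq.symm (hsc.not_adj_of_mem_support hWp hs₁ hs₂ hqS hq.1 hq.2 hpWp)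
  obtain ⟨u, hu, v, hv, hqI⟩ := hS q
  have hqu : q ≠ u := fun h => hqS (h ▸ hu)
  obtain ⟨W', hW', hqW'⟩ :=
    exists_isLongTolled_of_mem_tollInterval hqI hqu (fun h => hqS (h ▸ hv))
  by_cases hu' : u = s₁ ∨ u = s₂
  · exact hshare hW' hv hu' q hqW'
  by_cases hv' : v = s₁ ∨ v = s₂
  · exact hshare hW'.reverse hu hv' q (by simpa using hqW')
  push Not at hu' hv'
  -- the edge `pq` now joins the two tolled walks into one from `s₁` to a second partner `u`
  have hs₁W' : ∀ z ∈ W'.support, ¬ G.Adj s₁ z := fun z hz =>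
    hsc.not_adj_of_mem_support hW' hu hv hs₁ hu'.1.symm hv'.1.symm hz
  have huWp : ∀ z ∈ Wp.support, ¬ G.Adj u z := fun z hz =>
    hsc.not_adj_of_mem_support hWp hs₁ hs₂ hu hu'.1 hu'.2 hz
  have hps₁ : p ≠ s₁ := by
    rintro rfl
    exact hs₁W' q hqW' hpq
  obtain ⟨Z, hZ⟩ := hWp.isTolledAtStart.exists_isLongTolled_of_adj hW'.isTolledAtStart hpWp hps₁
    hqW' hqu hpq hs₁W' huWp
  exact absurd (hsc.eq_of_isLongTolled hs₁ hs₂ hu h₁₂ hZ).symm hu'.2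

lemma ncard_le_two [Nontrivial V] (hsc : IsTollScattered G S) (hS : IsTollSet G S)
    (hG : G.Preconnected) : S.ncard ≤ 2 := by
  by_contra! h₃
  obtain ⟨s₁, hs₁⟩ := Set.nonempty_of_ncard_ne_zero (by omega : S.ncard ≠ 0)
  obtain ⟨n, hn⟩ := hG.exists_adj_of_nontrivial s₁
  obtain ⟨s₂, hs₂, W₁₂, h₁₂⟩ := hsc.exists_isLongTolled hS hs₁ hn
  obtain ⟨s₃, hs₃, hs₃'⟩ : ∃ s₃ ∈ S, s₃ ∉ ({s₁, s₂} : Set V) := by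
    by_contra! hsub
    have := Set.ncard_le_ncard hsub (Set.toFinite _)
    have := Set.ncard_insert_le s₁ {s₂}
    simp only [Set.ncard_singleton] at this
    omega
  simp only [Set.mem_insert_iff, Set.mem_singleton_iff, not_or] at hs₃'
  have hs₃I : s₃ ∉ tollInterval G s₁ s₂ := fun h =>
    hsc.not_isTollInterior s₃ hs₃ ⟨s₁, hs₁, s₂, hs₂, hs₃'.1, hs₃'.2, h⟩
  obtain ⟨P⟩ := hG s₁ s₃
  obtain ⟨d, -, hd₁, hd₂⟩ := P.exists_boundary_dart (tollInterval G s₁ s₂)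
    (h₁₂.mem_tollInterval W₁₂.start_mem_support) hs₃I
  exact hd₂ (hsc.mem_tollInterval_of_adj hS hs₁ hs₂ h₁₂ hd₁ d.adj)

end IsTollScattered

end Scattered

theorem stmt16_general {V W : Type*} [Fintype V] [Nontrivial V]
    (G : SimpleGraph V) (H : SimpleGraph W)
    (hGc : G.Connected) (hH : H ≠ ⊤)
    (heq : tollNumber (lexProd G H) = 3 * tollNumber G) :
    tollNumber G = 2 := by
  obtain ⟨a, b, hab, hnab⟩ : ∃ a b : W, a ≠ b ∧ ¬ H.Adj a b := by
    contrapose! hH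
    ext a b
    exact ⟨fun h => h.ne, hH a b⟩
  obtain ⟨S, hSfin, hScard, hS⟩ := exists_isTollSet_ncard_eq_tollNumber G
  have h₂ := two_le_tollNumber G
  by_cases hsc : IsTollScattered G S
  · have := hsc.ncard_le_two hS hGc.preconnected
    omega
  · obtain ⟨D, hDfin, hD, hcard⟩ := exists_dominating_of_not_isTollScattered hSfin
      hGc.preconnected.exists_adj_of_nontrivial hsc
    have := tollNumber_lexProd_le H hSfin hDfin hS hD hab hnab
    omega

theorem stmt16 {V W : Type*} [Fintype V] [Fintype W] [Nontrivial V] [Nontrivial W]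
    (G : SimpleGraph V) (H : SimpleGraph W)
    (hGc : G.Connected) (hHc : H.Connected) (hH : H ≠ ⊤)
    (heq : tollNumber (lexProd G H) = 3 * tollNumber G) :
    tollNumber G = 2 :=
  stmt16_general G H hGc hH heq
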